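/- arXiv:2304.14140 — 4 statements merged into one kernel-verified Lean document; each statement's English description precedes it below -/
import Mathlib

section
/- For q = 3/2, the function W_{3/2}(z) = (2(z+1) - 2√(2z+1))/z satisfies W_{3/2}(z) · exp_{3/2}(W_{3/2}(z)) = z for all real z with z > -1/2 and z ≠ 0, where exp_{3/2}(x) = (1 - x/2)^{-2}. -/
/-- For q = 3/2, W_{3/2}(z) = (2(z+1) - 2√(2z+1))/z satisfies
W · exp_{3/2}(W) = z for z > -1/2, z ≠ 0, where exp_{3/2}(x) = (1 - x/2)⁻². -/
theorem stmt1 : ∀ z : ℝ, z > -1/2 → z ≠ 0 →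
    ((2*(z+1) - 2*Real.sqrt (2*z+1)) / z) *
      ((1 - ((2*(z+1) - 2*Real.sqrt (2*z+1)) / z) / 2) ^ 2)⁻¹ = z := by
  intro z hz hz0
  set s := Real.sqrt (2*z+1) with hsdef
  have hs : s^2 = 2*z+1 := Real.sq_sqrt (by linarith)
  have hs1 : s - 1 ≠ 0 := by
    intro h
    apply hz0
    have : s = 1 := by linarith
    rw [this] at hs
    nlinarith
  have hnum : 2*(z+1) - 2*s = (s-1)^2 := by nlinarith
  have hden : 1 - ((s-1)^2 / z) / 2 = (s - 1) / z := by
    field_simp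
    nlinarith
  rw [hnum, hden]
  field_simp
end

section
/- Let a, b, c, α, β be real numbers with a ≠ 0, b ≠ 0, α ≠ β, α ≠ 0, and let x > 0 satisfy a·x^α + b·x^β + c = 0. Set w = (b/a)·((β-α)/α)·x^(β-α). Then w·exp_q(w) = (b/a)·((β-α)/α)·(-c/a)^((β-α)/α) with q = 1 - α/(β-α), provided -c/a > 0. -/
/-- Tsallis q-exponential. -/
noncomputable def expq (q x : ℝ) : ℝ := (1 + (1 - q) * x) ^ (1 / (1 - q))

/-- A positive root of a·x^α + b·x^β + c = 0 yields a solution of the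
Lambert–Tsallis equation via w = (b/a)·((β-α)/α)·x^(β-α). -/
theorem stmt6 : ∀ a b c α β x : ℝ, a ≠ 0 → b ≠ 0 → α ≠ β → α ≠ 0 → 0 < x →
    a * x ^ α + b * x ^ β + c = 0 → 0 < -c / a →
    ((b / a) * ((β - α) / α) * x ^ (β - α)) *
      expq (1 - α / (β - α)) ((b / a) * ((β - α) / α) * x ^ (β - α)) =
      (b / a) * ((β - α) / α) * (-c / a) ^ ((β - α) / α) := by
  intro a b c α β x ha hb hαβ hα hx heq hc
  have hd : β - α ≠ 0 := sub_ne_zero.mpr (Ne.symm hαβ)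
  have hxα : (0:ℝ) < x ^ α := Real.rpow_pos_of_pos hx α
  have hxd : (0:ℝ) < x ^ (β - α) := Real.rpow_pos_of_pos hx (β - α)
  -- key identity: 1 + (b/a) * x^(β-α) = (-c/a) / x^α
  have hxβ : x ^ β = x ^ α * x ^ (β - α) := by
    rw [← Real.rpow_add hx]; ring_nf
  have key : 1 + (b / a) * x ^ (β - α) = (-c / a) / x ^ α := by
    field_simp
    linear_combination heq - b * hxβ
  have h1q : 1 - (1 - α / (β - α)) = α / (β - α) := by ring
  have harg : 1 + (1 - (1 - α / (β - α))) * ((b / a) * ((β - α) / α) * x ^ (β - α))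
      = (-c / a) / x ^ α := by
    rw [h1q, ← key]; field_simp
  have hinv : 1 / (1 - (1 - α / (β - α))) = (β - α) / α := by
    rw [h1q]; field_simp
  unfold expq
  rw [harg, hinv]
  have hpow : ((-c / a) / x ^ α) ^ ((β - α) / α)
      = (-c / a) ^ ((β - α) / α) / x ^ (β - α) := by
    rw [Real.div_rpow hc.le hxα.le, ← Real.rpow_mul hx.le]
    congr 2
    field_simp
  rw [hpow]
  field_simp
end

section
/- Conversely, if w is a real number with 1 + (α/(β-α))·w > 0 satisfying w·exp_q(w) = (b/a)·((β-α)/α)·(-c/a)^((β-α)/α) with q = 1 - α/(β-α), and w·(a/b)·(α/(β-α)) > 0, then x = (w·(a/b)·(α/(β-α)))^(1/(β-α)) satisfies a·x^α + b·x^β + c = 0, given a ≠ 0, b ≠ 0, α ≠ 0, β ≠ α, and -c/a > 0. -/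
/-- Conversely, a solution of the Lambert–Tsallis equation yields a root of
a·x^α + b·x^β + c = 0 via x = (w·(a/b)·(α/(β-α)))^(1/(β-α)). -/
theorem stmt7 : ∀ a b c α β w : ℝ, a ≠ 0 → b ≠ 0 → α ≠ 0 → β ≠ α → 0 < -c / a →
    1 + (α / (β - α)) * w > 0 →
    w * expq (1 - α / (β - α)) w =
      (b / a) * ((β - α) / α) * (-c / a) ^ ((β - α) / α) →
    w * (a / b) * (α / (β - α)) > 0 →
    a * ((w * (a / b) * (α / (β - α))) ^ (1 / (β - α))) ^ α +
      b * ((w * (a / b) * (α / (β - α))) ^ (1 / (β - α))) ^ β + c = 0 := by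
  intro a b c α β w ha hb hα hβα hca hpos heq hu
  have hδ : β - α ≠ 0 := sub_ne_zero.mpr hβα
  set δ := β - α with hδdef
  set t : ℝ := 1 + (α / δ) * w with htdef
  set u : ℝ := w * (a / b) * (α / δ) with hudef
  have ht : 0 < t := hpos
  have hu' : 0 < u := hu
  have hexp : expq (1 - α / δ) w = t ^ (δ / α) := by
    unfold expq
    have h1 : 1 - (1 - α / δ) = α / δ := by ring
    have h2 : 1 / (α / δ) = δ / α := by
      field_simp
    rw [h1, h2]
  have key : u * t ^ (δ / α) = (-c / a) ^ (δ / α) := by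
    rw [hudef]
    have : w * (a / b) * (α / δ) * t ^ (δ / α)
        = (a / b) * (α / δ) * (w * t ^ (δ / α)) := by ring
    rw [this, ← hexp, heq]
    field_simp
  have key2 : u ^ (α / δ) * t = -c / a := by
    have hmul : δ / α * (α / δ) = 1 := by field_simp
    have h1 : ((-c / a) ^ (δ / α)) ^ (α / δ) = -c / a := by
      rw [← Real.rpow_mul hca.le, hmul, Real.rpow_one]
    have h2 : (u * t ^ (δ / α)) ^ (α / δ) = u ^ (α / δ) * t := by
      rw [Real.mul_rpow hu'.le (Real.rpow_nonneg ht.le _),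
        ← Real.rpow_mul ht.le, hmul, Real.rpow_one]
    rw [← h2, key, h1]
  have hxα : (u ^ (1 / δ)) ^ α = u ^ (α / δ) := by
    rw [← Real.rpow_mul hu'.le]
    congr 1
    field_simp
  have hxβ : (u ^ (1 / δ)) ^ β = u ^ (α / δ) * u := by
    rw [← Real.rpow_mul hu'.le]
    have : 1 / δ * β = α / δ + 1 := by field_simp; ring
    rw [this, Real.rpow_add hu', Real.rpow_one]
  rw [hxα, hxβ]
  have hbu : b * u = a * ((α / δ) * w) := by
    rw [hudef]; field_simp
  have : a * u ^ (α / δ) + b * (u ^ (α / δ) * u) + c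
      = a * (u ^ (α / δ) * t) + c := by
    rw [htdef]
    have : b * (u ^ (α / δ) * u) = u ^ (α / δ) * (b * u) := by ring
    rw [this, hbu]; ring
  rw [this, key2]
  field_simp
  ring
end

section
/- The unique real solution of 4^x + 3^x = 5^x is x = 2. -/
lemma aux_strictAnti : StrictAnti (fun x : ℝ => (4/5 : ℝ) ^ x + (3/5 : ℝ) ^ x) := by
  have h1 : StrictAnti (fun x : ℝ => (4/5 : ℝ) ^ x) :=
    fun a b hab => Real.rpow_lt_rpow_of_exponent_gt (by norm_num) (by norm_num) hab
  have h2 : StrictAnti (fun x : ℝ => (3/5 : ℝ) ^ x) :=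
    fun a b hab => Real.rpow_lt_rpow_of_exponent_gt (by norm_num) (by norm_num) hab
  exact h1.add h2

/-- The unique real solution of 4^x + 3^x = 5^x is x = 2. -/
theorem stmt10 :
    ((4 : ℝ) ^ (2 : ℝ) + (3 : ℝ) ^ (2 : ℝ) = (5 : ℝ) ^ (2 : ℝ)) ∧
    (∀ x : ℝ, (4 : ℝ) ^ x + (3 : ℝ) ^ x = (5 : ℝ) ^ x → x = 2) := by
  have key : ∀ x : ℝ, (4/5 : ℝ) ^ x + (3/5 : ℝ) ^ x = (4:ℝ)^x / (5:ℝ)^x + (3:ℝ)^x / (5:ℝ)^x := by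
    intro x
    rw [Real.div_rpow (by norm_num) (by norm_num), Real.div_rpow (by norm_num) (by norm_num)]
  have h2 : (4/5 : ℝ) ^ (2:ℝ) + (3/5 : ℝ) ^ (2:ℝ) = 1 := by
    rw [show ((2:ℝ)) = ((2:ℕ):ℝ) by norm_num, Real.rpow_natCast, Real.rpow_natCast]
    norm_num
  constructor
  · have h5 : (0:ℝ) < (5:ℝ) ^ (2:ℝ) := Real.rpow_pos_of_pos (by norm_num) _
    have := key 2
    rw [h2] at this
    field_simp at this
    linarith
  · intro x hx
    have h5 : (0:ℝ) < (5:ℝ) ^ x := Real.rpow_pos_of_pos (by norm_num) _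
    have hfx : (4/5 : ℝ) ^ x + (3/5 : ℝ) ^ x = 1 := by
      rw [key x, ← add_div, hx, div_self h5.ne']
    exact aux_strictAnti.injective (hfx.trans h2.symm)
end
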